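/- For all integers t ≥ 2 and n ≥ 1, the Turán graph T_{n,t} is, up to isomorphism, the unique K_{t+1}-free graph on n vertices with ex_n(K_{t+1}) edges. -/

import Mathlib

open Filter Topology

attribute [local instance] Classical.propDecidable

/-- `G` contains a copy of `F`. -/
def Contains {α β : Type*} (F : SimpleGraph α) (G : SimpleGraph β) : Prop :=
  ∃ f : α ↪ β, ∀ a b, F.Adj a b → G.Adj (f a) (f b)

/-- Number of edges of a graph. -/
noncomputable def ecard {V : Type*} (G : SimpleGraph V) : ℕ := G.edgeSet.ncard

/-- The extremal number `ex_n(F)`. -/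
noncomputable def exNum (n : ℕ) {α : Type*} (F : SimpleGraph α) : ℕ :=
  sSup {m | ∃ H : SimpleGraph (Fin n), ¬ Contains F H ∧ ecard H = m}

/-- The generalized extremal number `ex_G(F)`. -/
noncomputable def exRel {V α : Type*} (G : SimpleGraph V) (F : SimpleGraph α) : ℕ :=
  sSup {m | ∃ H ≤ G, ¬ Contains F H ∧ ecard H = m}

/-- maximum size of a `t`-colorable subgraph of `G` -/
noncomputable def colRel {V : Type*} (G : SimpleGraph V) (t : ℕ) : ℕ :=
  sSup {m | ∃ H ≤ G, H.Colorable t ∧ ecard H = m}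

/-- probability that `G(n,p)` satisfies `P` -/
noncomputable def gnpProb (n : ℕ) (p : ℝ) (P : SimpleGraph (Fin n) → Prop) : ℝ :=
  ∑ᶠ G : SimpleGraph (Fin n),
    if P G then p ^ ecard G * (1 - p) ^ (n.choose 2 - ecard G) else 0

/-- number of labeled copies of `F` in `G` -/
noncomputable def numCopies {α V : Type*} (F : SimpleGraph α) (G : SimpleGraph V) : ℕ :=
  Set.ncard {f : α ↪ V | ∀ a b, F.Adj a b → G.Adj (f a) (f b)}

/-- expected number of labeled copies of `F` in `G(n,p)` -/
noncomputable def gnpExpCopies (n : ℕ) (p : ℝ) {α : Type*} (F : SimpleGraph α) : ℝ :=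
  ∑ᶠ G : SimpleGraph (Fin n),
    p ^ ecard G * (1 - p) ^ (n.choose 2 - ecard G) * numCopies F G

noncomputable def d2 {V : Type*} {F : SimpleGraph V} (H : F.Subgraph) : ℝ :=
  if 2 < H.verts.ncard then ((H.edgeSet.ncard : ℝ) - 1) / ((H.verts.ncard : ℝ) - 2)
  else 1/2

/-- the 2-density `m₂(F)` -/
noncomputable def m2 {V : Type*} (F : SimpleGraph V) : ℝ :=
  sSup {x | ∃ H : F.Subgraph, H.edgeSet.Nonempty ∧ d2 H = x}

/-- the asymmetric 2-density `m₂(F₁,F₂)` -/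
noncomputable def m2Asym {V W : Type*} (F₁ : SimpleGraph V) (F₂ : SimpleGraph W) : ℝ :=
  sSup {x | ∃ H : F₂.Subgraph, H.edgeSet.Nonempty ∧
    x = (H.edgeSet.ncard : ℝ) / ((H.verts.ncard : ℝ) - 2 + 1 / m2 F₁)}

/-- size of the cut given by a colouring `c` -/
noncomputable def cutSize {V : Type*} (G : SimpleGraph V) {t : ℕ} (c : V → Fin t) : ℕ :=
  Set.ncard {e ∈ G.edgeSet | ¬ (e.map c).IsDiag}

/-- a colouring is balanced if all colour classes have sizes differing by at most one -/
def BalancedPartition {V : Type*} [Fintype V] {t : ℕ} (c : V → Fin t) : Prop :=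
  ∀ i j : Fin t, (Finset.univ.filter fun v => c v = i).card ≤
    (Finset.univ.filter fun v => c v = j).card + 1

open SimpleGraph

theorem contains_iff_isContained {α β : Type*} (F : SimpleGraph α) (G : SimpleGraph β) :
    Contains F G ↔ F ⊑ G :=
  ⟨fun ⟨f, hf⟩ ↦ ⟨⟨⟨f, hf _ _⟩, f.injective⟩⟩,
    fun ⟨f⟩ ↦ ⟨f.toEmbedding, fun _ _ ↦ f.toHom.map_adj⟩⟩

theorem ecard_eq_card_edgeFinset {V : Type*} [Fintype V] (G : SimpleGraph V)
    [Fintype G.edgeSet] : ecard G = G.edgeFinset.card := by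
  rw [ecard, edgeFinset, Set.ncard_eq_toFinset_card']

theorem exNum_eq_extremalNumber (n : ℕ) {α : Type*} (F : SimpleGraph α) :
    exNum n F = extremalNumber n F := by
  apply le_antisymm
  · refine csSup_le' ?_
    rintro m ⟨G, hG, rfl⟩
    rw [ecard_eq_card_edgeFinset]
    simpa using
      card_edgeFinset_le_extremalNumber (G := G) ((contains_iff_isContained F G).not.mp hG)
  · have hbdd : BddAbove {m | ∃ H : SimpleGraph (Fin n), ¬ Contains F H ∧ ecard H = m} :=
      (Set.finite_range fun H : SimpleGraph (Fin n) ↦ ecard H).bddAbove.mono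
        (by rintro _ ⟨H, -, rfl⟩; exact ⟨H, rfl⟩)
    refine Finset.sup_le fun G hG ↦ le_csSup hbdd ⟨G, ?_, ?_⟩
    · rw [contains_iff_isContained]
      simpa using hG
    · rw [ecard_eq_card_edgeFinset]

theorem isTuranMaximal_iff_isExtremal_top_free {V : Type*} [Fintype V] (G : SimpleGraph V)
    [DecidableRel G.Adj] (r : ℕ) :
    G.IsTuranMaximal r ↔ G.IsExtremal (⊤ : SimpleGraph (Fin (r + 1))).Free := by
  have hclique : (fun G : SimpleGraph V ↦ G.CliqueFree (r + 1)) =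
      (⊤ : SimpleGraph (Fin (r + 1))).Free := by
    ext G
    rw [← cliqueFree_iff_top_free, Fintype.card_fin]
  rw [IsTuranMaximal, hclique]

theorem stmt1_general (t n : ℕ) (H : SimpleGraph (Fin n))
    (hfree : ¬ Contains (SimpleGraph.completeGraph (Fin (t + 1))) H)
    (hmax : ecard H = exNum n (SimpleGraph.completeGraph (Fin (t + 1)))) :
    Nonempty (H ≃g SimpleGraph.turanGraph n t) := by
  have hext : H.IsExtremal (⊤ : SimpleGraph (Fin (t + 1))).Free := by
    refine isExtremal_free_iff.mpr ⟨(contains_iff_isContained _ H).not.mp hfree, ?_⟩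
    rw [← ecard_eq_card_edgeFinset, hmax, exNum_eq_extremalNumber, Fintype.card_fin]
  have hiso := ((isTuranMaximal_iff_isExtremal_top_free H t).mpr hext).nonempty_iso_turanGraph
  rwa [Fintype.card_fin] at hiso

/-- Uniqueness in Turán's theorem. -/
theorem stmt1 (t n : ℕ) (ht : 2 ≤ t) (hn : 1 ≤ n) (H : SimpleGraph (Fin n))
    (hfree : ¬ Contains (SimpleGraph.completeGraph (Fin (t + 1))) H)
    (hmax : ecard H = exNum n (SimpleGraph.completeGraph (Fin (t + 1)))) :
    Nonempty (H ≃g SimpleGraph.turanGraph n t) :=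
  stmt1_general t n H hfree hmax
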